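/- For coprime integers 1 < n < m, the coefficient of a^0 (the constant term in a) in the rescaled HOMFLY polynomial P_s(T_{n,m}) equals binom_{q²}(m+n−1, n−1) / [n]_{q²}, as an identity in ℚ(q). -/

import Mathlib

/-!
Work in the field ℚ(q) of rational functions in one variable `q` over ℚ.
`qNum x j` is the q-integer `[j]_x = (1 - x^j)/(1 - x)`, `qFact x j` the q-factorial,
`qBinom x n k` the Gaussian binomial coefficient (all with base `x`, so that base `q^2`
gives the `q²`-analogues).  `Ps n m` is the rescaled HOMFLY polynomial of the `(n,m)`
torus knot, a polynomial in the variable `a` (= `Polynomial.X`) over ℚ(q), given by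
Jones' formula.
-/

noncomputable def q : RatFunc ℚ := RatFunc.X

noncomputable def qNum (x : RatFunc ℚ) (j : ℕ) : RatFunc ℚ := (1 - x ^ j) / (1 - x)

noncomputable def qFact (x : RatFunc ℚ) (j : ℕ) : RatFunc ℚ :=
  ∏ i ∈ Finset.range j, qNum x (i + 1)

noncomputable def qBinom (x : RatFunc ℚ) (n k : ℕ) : RatFunc ℚ :=
  qFact x n / (qFact x k * qFact x (n - k))

/-- Jones' formula for the rescaled HOMFLY polynomial of the `(n,m)` torus knot,
as a polynomial in `a` (= `Polynomial.X`) over `ℚ(q)`. -/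
noncomputable def Ps (n m : ℕ) : Polynomial (RatFunc ℚ) :=
  Polynomial.C ((1 - q ^ 2) / (1 - q ^ (2 * n))) *
    ∑ b ∈ Finset.range n,
      Polynomial.C (q ^ (2 * m * b)) *
        (∏ i ∈ Finset.range (n - 1 - b),
          Polynomial.C ((q ^ (2 * (i + 1)) - 1)⁻¹) *
            (Polynomial.C (q ^ (2 * (i + 1))) * Polynomial.X ^ 2 - 1)) *
        ∏ j ∈ Finset.range b,
          Polynomial.C ((1 - q ^ (2 * (j + 1)))⁻¹) *
            (Polynomial.X ^ 2 - Polynomial.C (q ^ (2 * (j + 1))))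

/-!
At `a = 0` the `b`-th summand of Jones' formula becomes, with `t = q²`,
`(-1)^b t^(b choose 2) (t^(m+1))^b / ((t;t)_b (t;t)_(n-1-b))`. By the `q`-binomial theorem
`(x;t)_N = ∑_b (-1)^b t^(b choose 2) [N choose b]_t x^b` the sum is
`(t^(m+1);t)_(n-1) / (t;t)_(n-1) = [m+n-1 choose n-1]_t`.
-/

open Finset

section QAnalogues

variable {R : Type*} [CommRing R] (t : R)

def qPochhammer (x : R) (N : ℕ) : R := ∏ j ∈ range N, (1 - x * t ^ j)

def gaussBinom : ℕ → ℕ → R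
  | _, 0 => 1
  | 0, _ + 1 => 0
  | n + 1, k + 1 => gaussBinom n k + t ^ (k + 1) * gaussBinom n (k + 1)

@[simp] lemma gaussBinom_zero_right (n : ℕ) : gaussBinom t n 0 = 1 := by
  cases n <;> rfl

lemma gaussBinom_succ_succ (n k : ℕ) :
    gaussBinom t (n + 1) (k + 1) = gaussBinom t n k + t ^ (k + 1) * gaussBinom t n (k + 1) :=
  rfl

lemma gaussBinom_eq_zero_of_lt : ∀ {n k : ℕ}, n < k → gaussBinom t n k = 0
  | 0, _ + 1, _ => rfl
  | n + 1, k + 1, h => by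
    rw [gaussBinom_succ_succ, gaussBinom_eq_zero_of_lt (by omega),
      gaussBinom_eq_zero_of_lt (by omega), mul_zero, add_zero]

@[simp] lemma qPochhammer_zero (x : R) : qPochhammer t x 0 = 1 := prod_range_zero _

lemma qPochhammer_succ (x : R) (N : ℕ) :
    qPochhammer t x (N + 1) = qPochhammer t x N * (1 - x * t ^ N) :=
  prod_range_succ _ _

lemma qPochhammer_succ' (x : R) (N : ℕ) :
    qPochhammer t x (N + 1) = (1 - x) * qPochhammer t (x * t) N := by
  rw [qPochhammer, qPochhammer, prod_range_succ', pow_zero, mul_one, mul_comm]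
  exact congrArg _ (prod_congr rfl fun j _ => by ring)

lemma qPochhammer_add (x : R) (M N : ℕ) :
    qPochhammer t x (M + N) = qPochhammer t x M * qPochhammer t (x * t ^ M) N := by
  simp only [qPochhammer, prod_range_add, pow_add, mul_assoc]

lemma qPochhammer_self (N : ℕ) : qPochhammer t t N = ∏ j ∈ range N, (1 - t ^ (j + 1)) := by
  simp only [qPochhammer, pow_succ']

lemma gaussBinom_mul_qPochhammer :
    ∀ k l : ℕ, gaussBinom t (k + l) k * (qPochhammer t t k * qPochhammer t t l) =
      qPochhammer t t (k + l)
  | 0, l => by simp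
  | k + 1, 0 => by
    have ih := gaussBinom_mul_qPochhammer k 0
    simp only [add_zero, qPochhammer_zero, mul_one] at ih ⊢
    rw [gaussBinom_succ_succ, gaussBinom_eq_zero_of_lt t (Nat.lt_succ_self k), qPochhammer_succ]
    linear_combination (1 - t * t ^ k) * ih
  | k + 1, l + 1 => by
    have ih₁ := gaussBinom_mul_qPochhammer k (l + 1)
    have ih₂ := gaussBinom_mul_qPochhammer (k + 1) l
    rw [show k + 1 + l = k + (l + 1) by omega] at ih₂
    rw [show k + 1 + (l + 1) = k + (l + 1) + 1 by omega, gaussBinom_succ_succ,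
      qPochhammer_succ t t (k + (l + 1))]
    rw [qPochhammer_succ] at ih₁ ⊢
    rw [qPochhammer_succ] at ih₂ ⊢
    linear_combination (1 - t * t ^ k) * ih₁ + t ^ (k + 1) * (1 - t * t ^ l) * ih₂
termination_by k l => k + l

theorem qPochhammer_eq_sum_gaussBinom (N : ℕ) (x : R) :
    qPochhammer t x N =
      ∑ b ∈ range (N + 1), (-1) ^ b * t ^ b.choose 2 * gaussBinom t N b * x ^ b := by
  induction N generalizing x with
  | zero => simp
  | succ N ih =>
    -- `(x;t)_(N+1) = (1 - x) (xt;t)_N`, then compare coefficients via the `t`-Pascal rule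
    rw [qPochhammer_succ', ih, sum_range_succ' _ (N + 1)]
    set d : ℕ → R := fun b => (-1) ^ b * t ^ b.choose 2 * gaussBinom t N b * (x * t) ^ b
    have hshift : ∑ b ∈ range (N + 1), d (b + 1) = ∑ b ∈ range (N + 1), d b - 1 := by
      have hlast : d (N + 1) = 0 := by simp [d, gaussBinom_eq_zero_of_lt t (Nat.lt_succ_self N)]
      have := (sum_range_succ' d (N + 1)).symm.trans (sum_range_succ d (N + 1))
      simp only [d, pow_zero, Nat.choose_zero_succ, gaussBinom_zero_right, mul_one] at this hlast
      linear_combination this + hlast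
    have hterm : ∀ b ∈ range (N + 1),
        (-1) ^ (b + 1) * t ^ (b + 1).choose 2 * gaussBinom t (N + 1) (b + 1) * x ^ (b + 1) =
          -x * d b + d (b + 1) := by
      intro b _
      simp only [d, gaussBinom_succ_succ, Nat.choose_succ_succ', Nat.choose_one_right]
      ring
    rw [sum_congr rfl hterm, sum_add_distrib, ← mul_sum, hshift]
    simp only [pow_zero, Nat.choose_zero_succ, gaussBinom_zero_right, mul_one]
    ring

end QAnalogues

lemma sum_div_qPochhammer {K : Type*} [Field K] (t : K) (hP : ∀ k, qPochhammer t t k ≠ 0)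
    (N : ℕ) (y : K) :
    ∑ b ∈ range (N + 1),
        (-1) ^ b * t ^ b.choose 2 * y ^ b / (qPochhammer t t b * qPochhammer t t (N - b)) =
      qPochhammer t y N / qPochhammer t t N := by
  rw [qPochhammer_eq_sum_gaussBinom, sum_div]
  refine sum_congr rfl fun b hb => ?_
  have hgauss := gaussBinom_mul_qPochhammer t b (N - b)
  rw [Nat.add_sub_cancel' (Nat.lt_succ_iff.mp (mem_range.mp hb))] at hgauss
  rw [eq_div_of_mul_eq (mul_ne_zero (hP b) (hP (N - b))) hgauss]
  field_simp [hP N]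

lemma RatFunc.one_sub_X_pow_ne_zero {K : Type*} [Field K] {k : ℕ} (hk : 0 < k) :
    (1 : RatFunc K) - RatFunc.X ^ k ≠ 0 := by
  rw [← RatFunc.algebraMap_X, ← map_pow, ← map_one (algebraMap (Polynomial K) (RatFunc K)),
    ← map_sub, map_ne_zero_iff _ (RatFunc.algebraMap_injective K), ← neg_sub, neg_ne_zero,
    ← Polynomial.C_1]
  exact Polynomial.X_pow_sub_C_ne_zero hk 1

lemma one_sub_q_sq_pow_ne_zero {k : ℕ} (hk : 0 < k) : 1 - (q ^ 2) ^ k ≠ 0 := by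
  rw [← pow_mul]
  exact RatFunc.one_sub_X_pow_ne_zero (by omega)

lemma qPochhammer_q_sq_ne_zero (k : ℕ) : qPochhammer (q ^ 2) (q ^ 2) k ≠ 0 :=
  prod_ne_zero_iff.2 fun j _ => by
    rw [← pow_succ']
    exact one_sub_q_sq_pow_ne_zero j.succ_pos

lemma qFact_eq_qPochhammer_div (x : RatFunc ℚ) (j : ℕ) :
    qFact x j = qPochhammer x x j / (1 - x) ^ j := by
  simp only [qFact, qNum, qPochhammer, prod_div_distrib, prod_const, card_range, pow_succ']

lemma qBinom_add_eq_qPochhammer_div (x : RatFunc ℚ) (hx : 1 - x ≠ 0) (k l : ℕ) :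
    qBinom x (k + l) k = qPochhammer x x (k + l) / (qPochhammer x x k * qPochhammer x x l) := by
  simp only [qBinom, Nat.add_sub_cancel_left, qFact_eq_qPochhammer_div, pow_add]
  field_simp

lemma coeff_Ps_succ_zero_eq_sum (N m : ℕ) :
    (Ps (N + 1) m).coeff 0 = (1 - q ^ 2) / (1 - (q ^ 2) ^ (N + 1)) *
      ∑ b ∈ range (N + 1), (-1) ^ b * (q ^ 2) ^ b.choose 2 * ((q ^ 2) ^ (m + 1)) ^ b /
        (qPochhammer (q ^ 2) (q ^ 2) b * qPochhammer (q ^ 2) (q ^ 2) (N - b)) := by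
  rw [Polynomial.coeff_zero_eq_eval_zero, Ps]
  simp only [Polynomial.eval_mul, Polynomial.eval_C, Polynomial.eval_finsetSum,
    Polynomial.eval_prod, Polynomial.eval_sub, Polynomial.eval_pow, Polynomial.eval_X,
    Polynomial.eval_one, pow_mul, Nat.add_sub_cancel, ne_eq, OfNat.ofNat_ne_zero,
    not_false_eq_true, zero_pow, mul_zero, zero_sub]
  generalize q ^ 2 = t
  have hlower (k : ℕ) :
      ∏ i ∈ range k, (t ^ (i + 1) - 1)⁻¹ * -1 = (qPochhammer t t k)⁻¹ := by
    rw [qPochhammer_self, ← prod_inv_distrib]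
    exact prod_congr rfl fun i _ => by rw [mul_neg_one, ← inv_neg, neg_sub]
  have hupper (b : ℕ) : ∏ j ∈ range b, (1 - t ^ (j + 1))⁻¹ * -t ^ (j + 1) =
      (-1) ^ b * t ^ b.choose 2 * t ^ b / qPochhammer t t b := by
    have hnum : ∏ j ∈ range b, -t ^ (j + 1) = (-1) ^ b * t ^ b.choose 2 * t ^ b := by
      rw [prod_congr rfl fun j _ => show -t ^ (j + 1) = -t * t ^ j by ring, prod_mul_distrib,
        prod_const, card_range, prod_pow_eq_pow_sum, sum_range_id, ← Nat.choose_two_right]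
      ring
    rw [prod_mul_distrib, hnum, prod_inv_distrib, qPochhammer_self]
    ring
  congr 1
  refine sum_congr rfl fun b _ => ?_
  rw [hlower, hupper]
  ring

theorem coeff_Ps_zero_general (n m : ℕ) (hn : 1 < n) :
    (Ps n m).coeff 0 = qBinom (q ^ 2) (m + n - 1) (n - 1) / qNum (q ^ 2) n := by
  obtain ⟨N, rfl⟩ : ∃ N, n = N + 1 := ⟨n - 1, by omega⟩
  have h₁ : 1 - q ^ 2 ≠ 0 := by simpa using one_sub_q_sq_pow_ne_zero one_pos
  have hN : 1 - (q ^ 2) ^ (N + 1) ≠ 0 := one_sub_q_sq_pow_ne_zero N.succ_pos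
  have hP := qPochhammer_q_sq_ne_zero
  have htail : qPochhammer (q ^ 2) ((q ^ 2) ^ (m + 1)) N =
      qPochhammer (q ^ 2) (q ^ 2) (m + N) / qPochhammer (q ^ 2) (q ^ 2) m := by
    rw [qPochhammer_add, ← pow_succ', mul_div_cancel_left₀ _ (hP m)]
  rw [coeff_Ps_succ_zero_eq_sum, sum_div_qPochhammer _ hP, htail,
    show m + (N + 1) - 1 = N + m by omega, Nat.add_sub_cancel,
    qBinom_add_eq_qPochhammer_div _ h₁, add_comm N m, qNum]
  field_simp

/-- For coprime `1 < n < m`, the constant term in `a` of the rescaled HOMFLY polynomial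
of the `(n,m)` torus knot equals `binom_{q²}(m+n-1, n-1) / [n]_{q²}`. -/
theorem coeff_Ps_zero (n m : ℕ) (hn : 1 < n) (hm : n < m) (hco : Nat.Coprime n m) :
    (Ps n m).coeff 0 = qBinom (q ^ 2) (m + n - 1) (n - 1) / qNum (q ^ 2) n :=
  coeff_Ps_zero_general n m hn
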